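/- Every vector v ∈ 𝔳 satisfies the J²-condition if and only if the following holds: for all nonzero v₁, v₂ ∈ 𝔳, if the subspaces ℝv₁ + J_𝔷v₁ and ℝv₂ + J_𝔷v₂ of 𝔳 have a nonzero common element, then ℝv₁ + J_𝔷v₁ = ℝv₂ + J_𝔷v₂. (For Damek–Ricci spaces, either condition is equivalent to the space being symmetric.) -/

import Mathlib

open RealInnerProductSpace

/-!
Write `S v = ℝv + J_𝔷v`. With `c = ⟪z₁, z₂⟫ / ‖z₂‖²` we have `z₁ - c z₂ ⊥ z₂` and
`J_{z₁} J_{z₂} v = -⟪z₁, z₂⟫ v + J_{z₁ - c z₂} J_{z₂} v`, so the `J²`-condition at `v` is equivalent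
to `J_𝔷 (S v) ⊆ S v`; for the converse, skew-symmetry of `J_z` gives `J_{z₁} J_{z₂} v ⊥ v` when
`z₁ ⊥ z₂`. If every `S v` is `J`-stable, then `w ∈ S v` gives `S w ≤ S v`, and `w = a v + J_z v ≠ 0`
gives `v ∈ S w` because `a w - J_z w = (a² + ‖z‖²) v`. Conversely, `S (J_z v) = S v` makes `S v`
stable under `J`.
-/

theorem inner_map_map_of_norm_map_eq_mul {E F : Type*} [NormedAddCommGroup E]
    [InnerProductSpace ℝ E] [NormedAddCommGroup F] [InnerProductSpace ℝ F]
    (f : E →ₗ[ℝ] F) (c : ℝ) (hf : ∀ x, ‖f x‖ = c * ‖x‖) (x y : E) :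
    ⟪f x, f y⟫ = c ^ 2 * ⟪x, y⟫ := by
  have h := congrArg (· ^ 2) (hf (x + y))
  simp only [map_add, norm_add_sq_real, mul_pow, hf x, hf y] at h
  linear_combination h / 2

namespace HeisenbergType

variable {𝕍 𝕫 : Type*} [NormedAddCommGroup 𝕍] [InnerProductSpace ℝ 𝕍]
  [NormedAddCommGroup 𝕫] [InnerProductSpace ℝ 𝕫] (J : 𝕫 →ₗ[ℝ] 𝕍 →ₗ[ℝ] 𝕍)

def jSpan (v : 𝕍) : Submodule ℝ 𝕍 :=
  (ℝ ∙ v) ⊔ LinearMap.range (J.flip v)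

def SatisfiesJSq (v : 𝕍) : Prop :=
  ∀ z₁ z₂ : 𝕫, ⟪z₁, z₂⟫ = 0 → ∃ z₃ : 𝕫, J z₁ (J z₂ v) = J z₃ v

variable {J}

theorem mem_jSpan {v w : 𝕍} : w ∈ jSpan J v ↔ ∃ (a : ℝ) (z : 𝕫), a • v + J z v = w := by
  simp [jSpan, Submodule.mem_sup, Submodule.mem_span_singleton]

theorem self_mem_jSpan (v : 𝕍) : v ∈ jSpan J v :=
  Submodule.mem_sup_left (Submodule.mem_span_singleton_self v)

theorem apply_mem_jSpan (z : 𝕫) (v : 𝕍) : J z v ∈ jSpan J v :=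
  Submodule.mem_sup_right ⟨z, rfl⟩

theorem jSpan_le {p : Submodule ℝ 𝕍} {v : 𝕍} (hv : v ∈ p) (hJ : ∀ z, J z v ∈ p) :
    jSpan J v ≤ p :=
  sup_le ((Submodule.span_singleton_le_iff_mem v p).mpr hv) (by rintro _ ⟨z, rfl⟩; exact hJ z)

theorem apply_mem_jSpan_of_mem {v w : 𝕍} (hv : ∀ z₁ z₂, J z₁ (J z₂ v) ∈ jSpan J v)
    (hw : w ∈ jSpan J v) (z : 𝕫) : J z w ∈ jSpan J v := by
  obtain ⟨a, z', rfl⟩ := mem_jSpan.mp hw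
  rw [map_add, map_smul]
  exact add_mem (Submodule.smul_mem _ a (apply_mem_jSpan z v)) (hv z z')

theorem jSpan_le_of_mem {v w : 𝕍} (hv : ∀ z₁ z₂, J z₁ (J z₂ v) ∈ jSpan J v)
    (hw : w ∈ jSpan J v) : jSpan J w ≤ jSpan J v :=
  jSpan_le hw (apply_mem_jSpan_of_mem hv hw)

theorem mem_jSpan_of_mem (hJsq : ∀ (z : 𝕫) (v : 𝕍), J z (J z v) = -(‖z‖ ^ 2) • v) {v w : 𝕍}
    (hw : w ∈ jSpan J v) (hw0 : w ≠ 0) : v ∈ jSpan J w := by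
  obtain ⟨a, z, rfl⟩ := mem_jSpan.mp hw
  have key : a • (a • v + J z v) - J z (a • v + J z v) = (a ^ 2 + ‖z‖ ^ 2) • v := by
    simp only [map_add, map_smul, hJsq]
    module
  have hc : a ^ 2 + ‖z‖ ^ 2 ≠ 0 := by
    intro hc
    have ha : a ^ 2 = 0 := by linarith [sq_nonneg a, sq_nonneg ‖z‖]
    have hz : ‖z‖ ^ 2 = 0 := by linarith [sq_nonneg a, sq_nonneg ‖z‖]
    simp_all
  have h := Submodule.smul_mem _ (a ^ 2 + ‖z‖ ^ 2)⁻¹ <|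
    sub_mem (Submodule.smul_mem _ a (self_mem_jSpan (J := J) (a • v + J z v)))
      (apply_mem_jSpan z _)
  rwa [key, inv_smul_smul₀ hc] at h

theorem apply_apply_mem_jSpan (hJsq : ∀ (z : 𝕫) (v : 𝕍), J z (J z v) = -(‖z‖ ^ 2) • v)
    {v : 𝕍} (hv : SatisfiesJSq J v) (z₁ z₂ : 𝕫) : J z₁ (J z₂ v) ∈ jSpan J v := by
  rcases eq_or_ne z₂ 0 with rfl | hz₂
  · simp
  set c := ⟪z₁, z₂⟫ / ‖z₂‖ ^ 2
  have hc : c * ‖z₂‖ ^ 2 = ⟪z₁, z₂⟫ := div_mul_cancel₀ _ (by positivity)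
  have horth : ⟪z₁ - c • z₂, z₂⟫ = 0 := by
    rw [inner_sub_left, real_inner_smul_left, real_inner_self_eq_norm_sq, hc, sub_self]
  obtain ⟨z₃, hz₃⟩ := hv _ _ horth
  have hsplit : J z₁ (J z₂ v) = (-⟪z₁, z₂⟫) • v + J z₃ v := by
    rw [← hz₃, ← hc, map_sub, map_smul, LinearMap.sub_apply, LinearMap.smul_apply, hJsq]
    module
  exact hsplit ▸ mem_jSpan.mpr ⟨_, _, rfl⟩

theorem jSpan_eq_of_mem (hJsq : ∀ (z : 𝕫) (v : 𝕍), J z (J z v) = -(‖z‖ ^ 2) • v)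
    (hJ : ∀ u : 𝕍, SatisfiesJSq J u) {v w : 𝕍} (hw : w ∈ jSpan J v) (hw0 : w ≠ 0) :
    jSpan J w = jSpan J v :=
  le_antisymm (jSpan_le_of_mem (apply_apply_mem_jSpan hJsq (hJ v)) hw)
    (jSpan_le_of_mem (apply_apply_mem_jSpan hJsq (hJ w)) (mem_jSpan_of_mem hJsq hw hw0))

theorem inner_apply_left (hJsq : ∀ (z : 𝕫) (v : 𝕍), J z (J z v) = -(‖z‖ ^ 2) • v)
    (hJnorm : ∀ (z : 𝕫) (v : 𝕍), ‖J z v‖ = ‖z‖ * ‖v‖) (z : 𝕫) (u v : 𝕍) :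
    ⟪J z u, v⟫ = -⟪u, J z v⟫ := by
  rcases eq_or_ne z 0 with rfl | hz
  · simp
  have h := inner_map_map_of_norm_map_eq_mul (J z) ‖z‖ (hJnorm z) u (J z v)
  rw [hJsq, inner_smul_right] at h
  exact mul_left_cancel₀ (by positivity : ‖z‖ ^ 2 ≠ 0) (by linarith)

theorem inner_apply_self (hJsq : ∀ (z : 𝕫) (v : 𝕍), J z (J z v) = -(‖z‖ ^ 2) • v)
    (hJnorm : ∀ (z : 𝕫) (v : 𝕍), ‖J z v‖ = ‖z‖ * ‖v‖) (z : 𝕫) (v : 𝕍) : ⟪J z v, v⟫ = 0 := by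
  have h := inner_apply_left hJsq hJnorm z v v
  rw [real_inner_comm (J z v) v] at h
  linarith

theorem satisfiesJSq_of_apply_apply_mem (hJsq : ∀ (z : 𝕫) (v : 𝕍), J z (J z v) = -(‖z‖ ^ 2) • v)
    (hJnorm : ∀ (z : 𝕫) (v : 𝕍), ‖J z v‖ = ‖z‖ * ‖v‖) {v : 𝕍}
    (hv : ∀ z₁ z₂, J z₁ (J z₂ v) ∈ jSpan J v) : SatisfiesJSq J v := by
  intro z₁ z₂ h₁₂
  obtain ⟨a, z, hz⟩ := mem_jSpan.mp (hv z₁ z₂)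
  have hnorm : ∀ z', ‖J.flip v z'‖ = ‖v‖ * ‖z'‖ := fun z' => (hJnorm z' v).trans (mul_comm _ _)
  have ha : a * ‖v‖ ^ 2 = 0 := by
    have h := congrArg (⟪·, v⟫) hz
    simp only [inner_add_left, real_inner_smul_left, real_inner_self_eq_norm_sq,
      inner_apply_self hJsq hJnorm, inner_apply_left hJsq hJnorm z₁] at h
    have h₂₁ := inner_map_map_of_norm_map_eq_mul (J.flip v) ‖v‖ hnorm z₂ z₁
    rw [real_inner_comm z₁ z₂, h₁₂] at h₂₁
    simp only [LinearMap.flip_apply] at h₂₁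
    linarith
  have hav : a • v = 0 := by
    rcases mul_eq_zero.mp ha with ha | hv0
    · rw [ha, zero_smul]
    · simp_all
  exact ⟨z, by rw [← hz, hav, zero_add]⟩

end HeisenbergType

open HeisenbergType

theorem stmt_7_general
    {𝕍 𝕫 : Type*} [NormedAddCommGroup 𝕍] [InnerProductSpace ℝ 𝕍]
    [NormedAddCommGroup 𝕫] [InnerProductSpace ℝ 𝕫]
    (J : 𝕫 →ₗ[ℝ] 𝕍 →ₗ[ℝ] 𝕍)
    (hJsq : ∀ (z : 𝕫) (v : 𝕍), J z (J z v) = -(‖z‖ ^ 2) • v)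
    (hJnorm : ∀ (z : 𝕫) (v : 𝕍), ‖J z v‖ = ‖z‖ * ‖v‖) :
    (∀ v : 𝕍, ∀ z₁ z₂ : 𝕫, ⟪z₁, z₂⟫ = 0 → ∃ z₃ : 𝕫, J z₁ (J z₂ v) = J z₃ v) ↔
      (∀ v₁ v₂ : 𝕍, v₁ ≠ 0 → v₂ ≠ 0 →
        (∃ w : 𝕍, w ≠ 0 ∧
            w ∈ ((ℝ ∙ v₁) ⊔ LinearMap.range (J.flip v₁)) ⊓
                ((ℝ ∙ v₂) ⊔ LinearMap.range (J.flip v₂))) →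
        (ℝ ∙ v₁) ⊔ LinearMap.range (J.flip v₁) =
          (ℝ ∙ v₂) ⊔ LinearMap.range (J.flip v₂)) := by
  constructor
  · rintro hJ v₁ v₂ - - ⟨w, hw0, hw₁, hw₂⟩
    exact (jSpan_eq_of_mem hJsq hJ hw₁ hw0).symm.trans (jSpan_eq_of_mem hJsq hJ hw₂ hw0)
  · intro h v
    refine satisfiesJSq_of_apply_apply_mem hJsq hJnorm fun z₁ z₂ => ?_
    by_cases hw0 : J z₂ v = 0
    · simp [hw0]
    have hv : v ≠ 0 := by
      rintro rfl
      simp at hw0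
    have hS : jSpan J (J z₂ v) = jSpan J v :=
      h (J z₂ v) v hw0 hv ⟨J z₂ v, hw0, self_mem_jSpan _, apply_mem_jSpan z₂ v⟩
    exact hS ▸ apply_mem_jSpan z₁ _

/-- Every `v ∈ 𝔳` satisfies the `J²`-condition iff for all nonzero `v₁, v₂ ∈ 𝔳`, the
subspaces `ℝv₁ + J_𝔷v₁` and `ℝv₂ + J_𝔷v₂` either intersect trivially or coincide. -/
theorem stmt_7
    {𝕍 𝕫 : Type*} [NormedAddCommGroup 𝕍] [InnerProductSpace ℝ 𝕍] [FiniteDimensional ℝ 𝕍]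
    [NormedAddCommGroup 𝕫] [InnerProductSpace ℝ 𝕫] [FiniteDimensional ℝ 𝕫]
    (J : 𝕫 →ₗ[ℝ] 𝕍 →ₗ[ℝ] 𝕍)
    (hJsq : ∀ (z : 𝕫) (v : 𝕍), J z (J z v) = -(‖z‖ ^ 2) • v)
    (hJnorm : ∀ (z : 𝕫) (v : 𝕍), ‖J z v‖ = ‖z‖ * ‖v‖)
    (br : 𝕍 →ₗ[ℝ] 𝕍 →ₗ[ℝ] 𝕫)
    (hbr : ∀ (U V : 𝕍) (Z : 𝕫), ⟪br U V, Z⟫ = ⟪J Z U, V⟫) :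
    (∀ v : 𝕍, ∀ z₁ z₂ : 𝕫, ⟪z₁, z₂⟫ = 0 → ∃ z₃ : 𝕫, J z₁ (J z₂ v) = J z₃ v) ↔
      (∀ v₁ v₂ : 𝕍, v₁ ≠ 0 → v₂ ≠ 0 →
        (∃ w : 𝕍, w ≠ 0 ∧
            w ∈ ((ℝ ∙ v₁) ⊔ LinearMap.range (J.flip v₁)) ⊓
                ((ℝ ∙ v₂) ⊔ LinearMap.range (J.flip v₂))) →
        (ℝ ∙ v₁) ⊔ LinearMap.range (J.flip v₁) =
          (ℝ ∙ v₂) ⊔ LinearMap.range (J.flip v₂)) :=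
  stmt_7_general J hJsq hJnorm
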